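/- arXiv:2507.22314 — 3 statements merged into one kernel-verified Lean document; each statement's English description precedes it below -/
import Mathlib

section
/- Let M be a saturated Dieudonné complex, r > 0 an integer, and n an integer. If x ∈ Mⁿ satisfies F x ∈ im(Vʳ) + im(d ∘ Vʳ) (inside Mⁿ), then x ∈ im(Vʳ) + im(d ∘ Vʳ). -/
/-- A saturated Dieudonné complex: a cochain complex of abelian groups indexed by `ℤ`,
with operators `F` (degree 0) satisfying `dF = pFd`, `p`-torsionfree, `F` injective with
image `{x : dx ∈ pM}`, together with the (unique) Verschiebung `V` satisfying
`FV = VF = p`. -/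
structure SaturatedDieudonneComplex (p : ℕ) where
  M : ℤ → Type
  inst : ∀ n, AddCommGroup (M n)
  d : ∀ n, M n →+ M (n + 1)
  F : ∀ n, M n →+ M n
  V : ∀ n, M n →+ M n
  dd : ∀ n (x : M n), d (n + 1) (d n x) = 0
  dF : ∀ n (x : M n), d n (F n x) = p • F (n + 1) (d n x)
  torsionfree : ∀ n (x : M n), p • x = 0 → x = 0
  F_injective : ∀ n, Function.Injective (F n)
  F_image : ∀ n (x : M n), (∃ w, F n w = x) ↔ ∃ y, d n x = p • y
  FV : ∀ n (x : M n), F n (V n x) = p • x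
  VF : ∀ n (x : M n), V n (F n x) = p • x

attribute [instance] SaturatedDieudonneComplex.inst

/-! Since `d (Vʳ z) = F (d (Vʳ⁺¹ z))`, subtracting `d (Vʳ⁺¹ z)` from `x` reduces the claim to:
`F u ∈ im Vʳ` implies `u ∈ im Vʳ`. For `r = 1`, `F u = V c` gives `d c = F d V c = F d F u = p F F d u`,
so `c = F a` by saturation, and then `F u = V F a = F V a` forces `u = V a`; iterate. -/

namespace SaturatedDieudonneComplex

variable {p : ℕ} (M : SaturatedDieudonneComplex p)

theorem nsmul_injective (n : ℤ) : Function.Injective fun a : M.M n => p • a := by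
  intro a b h
  rw [← sub_eq_zero]
  exact M.torsionfree n _ (by rw [smul_sub, sub_eq_zero]; exact h)

theorem F_d_V (n : ℤ) (x : M.M n) : M.F (n + 1) (M.d n (M.V n x)) = M.d n x := by
  apply M.nsmul_injective (n + 1)
  simp only [← map_nsmul, ← M.dF, M.FV]

theorem exists_F_eq_and_eq_V_of_F_eq_V {n : ℤ} {u c : M.M n} (h : M.F n u = M.V n c) :
    ∃ a, M.F n a = c ∧ u = M.V n a := by
  have hdc : M.d n c = p • M.F (n + 1) (M.F (n + 1) (M.d n u)) := by
    rw [← M.F_d_V, ← h, M.dF, map_nsmul]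
  obtain ⟨a, rfl⟩ := (M.F_image n c).mpr ⟨_, hdc⟩
  refine ⟨a, rfl, M.F_injective n ?_⟩
  rw [h, M.VF, M.FV]

theorem exists_eq_iterate_V_of_F_eq_iterate_V (r : ℕ) {n : ℤ} {u y : M.M n}
    (h : M.F n u = (⇑(M.V n))^[r] y) : ∃ w, u = (⇑(M.V n))^[r] w := by
  induction r generalizing u with
  | zero => exact ⟨u, rfl⟩
  | succ r ih =>
    rw [Function.iterate_succ_apply'] at h
    obtain ⟨a, ha, rfl⟩ := M.exists_F_eq_and_eq_V_of_F_eq_V h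
    obtain ⟨w, rfl⟩ := ih ha
    exact ⟨w, (Function.iterate_succ_apply' _ _ _).symm⟩

end SaturatedDieudonneComplex

theorem F_mem_imV_add_imdV_general {p : ℕ} (M : SaturatedDieudonneComplex p)
    (r : ℕ) (n : ℤ) (x : M.M (n + 1))
    (h : ∃ (y : M.M (n + 1)) (z : M.M n),
      M.F (n + 1) x = (⇑(M.V (n + 1)))^[r] y + M.d n ((⇑(M.V n))^[r] z)) :
    ∃ (y : M.M (n + 1)) (z : M.M n),
      x = (⇑(M.V (n + 1)))^[r] y + M.d n ((⇑(M.V n))^[r] z) := by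
  obtain ⟨y, z, h⟩ := h
  have hdV : M.F (n + 1) (M.d n ((⇑(M.V n))^[r] (M.V n z))) = M.d n ((⇑(M.V n))^[r] z) := by
    rw [← Function.iterate_succ_apply, Function.iterate_succ_apply', M.F_d_V]
  have hF : M.F (n + 1) (x - M.d n ((⇑(M.V n))^[r] (M.V n z))) = (⇑(M.V (n + 1)))^[r] y := by
    rw [map_sub, hdV, h, add_sub_cancel_right]
  obtain ⟨w, hw⟩ := M.exists_eq_iterate_V_of_F_eq_iterate_V r hF
  exact ⟨w, M.V n z, by rw [← hw, sub_add_cancel]⟩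

/-- If `M` is a saturated Dieudonné complex, `r > 0`, and `x ∈ Mⁿ` satisfies
`F x ∈ im Vʳ + im (d ∘ Vʳ)`, then `x ∈ im Vʳ + im (d ∘ Vʳ)`. -/
theorem F_mem_imV_add_imdV {p : ℕ} (hp : p.Prime) (M : SaturatedDieudonneComplex p)
    (r : ℕ) (hr : 0 < r) (n : ℤ) (x : M.M (n + 1))
    (h : ∃ (y : M.M (n + 1)) (z : M.M n),
      M.F (n + 1) x = (⇑(M.V (n + 1)))^[r] y + M.d n ((⇑(M.V n))^[r] z)) :
    ∃ (y : M.M (n + 1)) (z : M.M n),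
      x = (⇑(M.V (n + 1)))^[r] y + M.d n ((⇑(M.V n))^[r] z) :=
  F_mem_imV_add_imdV_general M r n x h
end

section
/- Let M be a saturated Dieudonné complex in which M⁻¹ = 0, and suppose M⁰ = A is a commutative ring with F a ring endomorphism of A such that F(a) ≡ aᵖ mod pA for all a. Then the induced map on A/VA given by a + VA ↦ F(a) + VA is well-defined, equals the p-power Frobenius of the 𝔽ₚ-algebra A/VA, and is injective. -/
/-- A saturated Dieudonné algebra-type datum: a saturated Dieudonné complex concentrated
in degrees `≥ 0` (so `M⁻¹ = 0`), whose degree-0 term is a commutative ring `A`, with `F`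
a ring endomorphism of `A` lifting the `p`-power Frobenius.  Here `M k` denotes the
degree-`(k+1)` term of the complex, `d0 : A → M 0` the differential out of degree `0`,
and `V` is the (unique) Verschiebung, satisfying `FV = VF = p`. -/
structure SaturatedDieudonneAlgebra (p : ℕ) where
  A : Type
  ringA : CommRing A
  M : ℕ → Type
  inst : ∀ k, AddCommGroup (M k)
  d0 : A →+ M 0
  d : ∀ k, M k →+ M (k + 1)
  F0 : A →+* A
  F : ∀ k, M k →+ M k
  V0 : A →+ A
  V : ∀ k, M k →+ M k
  dd0 : ∀ a : A, d 0 (d0 a) = 0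
  dd : ∀ k (x : M k), d (k + 1) (d k x) = 0
  dF0 : ∀ a : A, d0 (F0 a) = p • F 0 (d0 a)
  dF : ∀ k (x : M k), d k (F k x) = p • F (k + 1) (d k x)
  torsionfree0 : ∀ a : A, p • a = 0 → a = 0
  torsionfree : ∀ k (x : M k), p • x = 0 → x = 0
  F0_injective : Function.Injective F0
  F_injective : ∀ k, Function.Injective (F k)
  F0_image : ∀ a : A, (∃ b, F0 b = a) ↔ ∃ y, d0 a = p • y
  F_image : ∀ k (x : M k), (∃ w, F k w = x) ↔ ∃ y, d k x = p • y
  FV0 : ∀ a : A, F0 (V0 a) = p • a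
  VF0 : ∀ a : A, V0 (F0 a) = p • a
  FV : ∀ k (x : M k), F k (V k x) = p • x
  VF : ∀ k (x : M k), V k (F k x) = p • x
  frobenius_lift : ∀ a : A, ∃ b : A, F0 a - a ^ p = p * b

attribute [instance] SaturatedDieudonneAlgebra.ringA SaturatedDieudonneAlgebra.inst

/-!
The identity `F (d (V b)) = d b` on `A` (from `d F = p F d`, `F V = p` and `p`-torsionfreeness)
drives injectivity: if `F a = V c`, then `d c = F (d (F a)) = p • F (F (d a))`, so by saturation
`c = F b`, whence `F a = V (F b) = F (V b)` and `a = V b`. The other two parts only use that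
`p a = V (F a)` and that `F` commutes with `V`.
-/

namespace SaturatedDieudonneAlgebra

variable {p : ℕ} (D : SaturatedDieudonneAlgebra p)

theorem F0_V0 (a : D.A) : D.F0 (D.V0 a) = D.V0 (D.F0 a) := by
  rw [D.FV0, D.VF0]

theorem F_d0_V0 (b : D.A) : D.F 0 (D.d0 (D.V0 b)) = D.d0 b := by
  have h : p • D.F 0 (D.d0 (D.V0 b)) = p • D.d0 b := by
    rw [← D.dF0, D.FV0, map_nsmul]
  exact sub_eq_zero.mp (D.torsionfree 0 _ (by rw [smul_sub, h, sub_self]))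

theorem F0_sub_F0_eq_V0 {a b c : D.A} (h : a - b = D.V0 c) :
    D.F0 a - D.F0 b = D.V0 (D.F0 c) := by
  rw [← map_sub, h, F0_V0]

theorem exists_F0_sub_pow_eq_V0 (a : D.A) : ∃ c, D.F0 a - a ^ p = D.V0 c := by
  obtain ⟨b, hb⟩ := D.frobenius_lift a
  exact ⟨D.F0 b, by rw [hb, D.VF0, nsmul_eq_mul]⟩

theorem exists_eq_V0_of_F0_eq_V0 {a c : D.A} (h : D.F0 a = D.V0 c) : ∃ b, a = D.V0 b := by
  have hdc : D.d0 c = p • D.F 0 (D.F 0 (D.d0 a)) := by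
    rw [← D.F_d0_V0, ← h, D.dF0, map_nsmul]
  obtain ⟨b, rfl⟩ := (D.F0_image c).mpr ⟨_, hdc⟩
  exact ⟨b, D.F0_injective (by rw [h, F0_V0])⟩

end SaturatedDieudonneAlgebra

theorem F_induces_injective_frobenius_on_quotient_general {p : ℕ}
    (D : SaturatedDieudonneAlgebra p) :
    (∀ a b : D.A, (∃ c, a - b = D.V0 c) → ∃ c, D.F0 a - D.F0 b = D.V0 c) ∧
    (∀ a : D.A, ∃ c, D.F0 a - a ^ p = D.V0 c) ∧
    (∀ a : D.A, (∃ c, D.F0 a = D.V0 c) → ∃ c, a = D.V0 c) :=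
  ⟨fun _ _ ⟨_, h⟩ => ⟨_, D.F0_sub_F0_eq_V0 h⟩, D.exists_F0_sub_pow_eq_V0,
    fun _ ⟨_, h⟩ => D.exists_eq_V0_of_F0_eq_V0 h⟩

/-- For a saturated Dieudonné algebra with `M⁻¹ = 0` and `A = M⁰`, the map induced by `F`
on `A/VA` is well-defined, agrees with the `p`-power Frobenius of the `𝔽ₚ`-algebra
`A/VA`, and is injective. -/
theorem F_induces_injective_frobenius_on_quotient {p : ℕ} (hp : p.Prime)
    (D : SaturatedDieudonneAlgebra p) :
    (∀ a b : D.A, (∃ c, a - b = D.V0 c) → ∃ c, D.F0 a - D.F0 b = D.V0 c) ∧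
    (∀ a : D.A, ∃ c, D.F0 a - a ^ p = D.V0 c) ∧
    (∀ a : D.A, (∃ c, D.F0 a = D.V0 c) → ∃ c, a = D.V0 c) :=
  F_induces_injective_frobenius_on_quotient_general D
end

section
/- Let k be a perfect field of characteristic p > 0 and let J ⊆ k[x₁, …, xₙ] be an ideal such that: (i) J is nonzero; (ii) for every polynomial g, if gᵖ ∈ J then g ∈ J; and (iii) for every g ∈ J and every 1 ≤ i ≤ n, the partial derivative ∂g/∂xᵢ lies in J. Then J is the unit ideal. -/
/-!
Take a nonzero `g ∈ J` of minimal total degree. A nonzero partial derivative of `g` would be an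
element of `J` of smaller degree, so all partial derivatives of `g` vanish. In characteristic `p`
this forces every exponent of `g` to be divisible by `p`, and over a perfect field `g` is then a
`p`-th power `hᵖ`; but `h ∈ J` has smaller degree unless `g` is constant. Hence `g` is a nonzero
constant, i.e. a unit.
-/

open MvPolynomial

namespace MvPolynomial

variable {σ R : Type*} [CommSemiring R]

theorem totalDegree_pderiv_lt {g : MvPolynomial σ R} {i : σ} (h : pderiv i g ≠ 0) :
    (pderiv i g).totalDegree < g.totalDegree := by
  obtain ⟨m, hm, hdeg⟩ :=
    Finset.exists_mem_eq_sup _ (support_nonempty.mpr h) fun s => s.sum fun _ e => e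
  have hmem : m + Finsupp.single i 1 ∈ g.support := by
    rw [mem_support_iff, coeff_pderiv] at hm
    exact mem_support_iff.mpr (left_ne_zero_of_mul hm)
  calc (pderiv i g).totalDegree = m.sum fun _ e => e := hdeg
    _ < (m + Finsupp.single i 1).sum fun _ e => e := by simp [Finsupp.sum_add_index']
    _ ≤ g.totalDegree := le_totalDegree hmem

theorem totalDegree_pow_of_isDomain [NoZeroDivisors R] (f : MvPolynomial σ R) (n : ℕ) :
    (f ^ n).totalDegree = n * f.totalDegree := by
  rcases eq_or_ne f 0 with rfl | hf
  · simpa using totalDegree_pow (0 : MvPolynomial σ R) n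
  induction n with
  | zero => simp
  | succ n ih =>
    rw [pow_succ, totalDegree_mul_of_isDomain (pow_ne_zero n hf) hf, ih, add_mul, one_mul]

theorem dvd_of_mem_support_of_pderiv_eq_zero (p : ℕ) [NoZeroDivisors R] [CharP R p]
    {g : MvPolynomial σ R} {i : σ} (hg : pderiv i g = 0) {m : σ →₀ ℕ}
    (hm : m ∈ g.support) : p ∣ m i := by
  obtain h0 | hpos := (m i).eq_zero_or_pos
  · simp [h0]
  have hle : Finsupp.single i 1 ≤ m := Finsupp.single_le_iff.mpr hpos
  have hcoeff := coeff_pderiv (i := i) g (m - Finsupp.single i 1)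
  rw [hg, coeff_zero, tsub_add_cancel_of_le hle, Finsupp.tsub_apply, Finsupp.single_eq_same,
    ← Nat.cast_add_one, Nat.sub_add_cancel hpos, eq_comm] at hcoeff
  exact (CharP.cast_eq_zero_iff R p _).mp
    ((mul_eq_zero.mp hcoeff).resolve_left (mem_support_iff.mp hm))

theorem exists_pow_eq_of_forall_mem_support_dvd (p : ℕ) [ExpChar R p] [PerfectRing R p]
    {g : MvPolynomial σ R} (hg : ∀ m ∈ g.support, ∀ i, p ∣ m i) :
    ∃ h : MvPolynomial σ R, h ^ p = g := by
  let root (m : σ →₀ ℕ) : σ →₀ ℕ := Finsupp.mapRange (· / p) (Nat.zero_div p) m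
  refine ⟨∑ m ∈ g.support, monomial (root m) ((frobeniusEquiv R p).symm (g.coeff m)), ?_⟩
  rw [sum_pow_char]
  conv_rhs => rw [g.as_sum]
  refine Finset.sum_congr rfl fun m hm => ?_
  have hpm : p • root m = m := by
    ext i
    exact Nat.mul_div_cancel' (hg m hm i)
  rw [monomial_pow, hpm, frobeniusEquiv_symm_pow_p]

end MvPolynomial

/-- Let `k` be a perfect field of characteristic `p > 0` and `J ⊆ k[x₁,…,xₙ]` a nonzero
ideal closed under `p`-th roots and under partial derivatives.  Then `J` is the unit
ideal. -/
theorem ideal_closed_under_roots_and_derivs_eq_top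
    {k : Type} [Field k] (p : ℕ) (hp : p.Prime) [CharP k p] [PerfectField k]
    (n : ℕ) (J : Ideal (MvPolynomial (Fin n) k))
    (hJ0 : J ≠ ⊥)
    (hroot : ∀ g : MvPolynomial (Fin n) k, g ^ p ∈ J → g ∈ J)
    (hderiv : ∀ g ∈ J, ∀ i : Fin n, pderiv i g ∈ J) :
    J = ⊤ := by
  have : Fact p.Prime := ⟨hp⟩
  obtain ⟨g, hgJ, hg0⟩ := Submodule.exists_mem_ne_zero_of_ne_bot hJ0
  induction hd : g.totalDegree using Nat.strong_induction_on generalizing g with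
  | _ d ih =>
  subst hd
  obtain hconst | hpos := g.totalDegree.eq_zero_or_pos
  · rw [totalDegree_eq_zero_iff_eq_C] at hconst
    have hc0 : g.coeff 0 ≠ 0 := fun h0 => hg0 (by rw [hconst, h0, C_0])
    exact Ideal.eq_top_of_isUnit_mem J hgJ (hconst ▸ hc0.isUnit.map C)
  by_cases hder : ∀ i, pderiv i g = 0
  · obtain ⟨h, rfl⟩ := exists_pow_eq_of_forall_mem_support_dvd p fun m hm i =>
      dvd_of_mem_support_of_pderiv_eq_zero p (hder i) hm
    have hlt : h.totalDegree < (h ^ p).totalDegree := by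
      rw [totalDegree_pow_of_isDomain] at hpos ⊢
      exact lt_mul_left (Nat.pos_of_mul_pos_left hpos) hp.one_lt
    exact ih _ hlt h (hroot h hgJ) (ne_zero_pow hp.ne_zero hg0) rfl
  · obtain ⟨i, hi⟩ := not_forall.mp hder
    exact ih _ (totalDegree_pderiv_lt hi) _ (hderiv g hgJ i) hi rfl
end
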